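/- Let j ≥ 0 and n ≥ 1 be integers and let f be a (j+1)-times continuously differentiable real function on I. Then Σ_{k=1}^{n} ∫_{A_k} |f(t) − ψ_{j,t_{k−1},f}(t)|² dt ≤ 2 (j!)^{−2} n^{−2j−2} ‖f^{(j+1)}‖²_{L²(I)}. -/

import Mathlib

open MeasureTheory

/-- The interval `I = [−1/2, 1/2]`. -/
def II : Set ℝ := Set.Icc (-(1/2)) (1/2)

/-- The grid point `t_k = −1/2 + k/n`. -/
noncomputable def tk (n k : ℕ) : ℝ := -(1/2) + (k : ℝ) / (n : ℝ)

/-- The cell `A_k = [t_{k−1}, t_k)` for `k < n` and `A_n = [t_{n−1}, t_n]`. -/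
noncomputable def Ak (n k : ℕ) : Set ℝ :=
  if k = n then Set.Icc (tk n (k - 1)) (tk n k) else Set.Ico (tk n (k - 1)) (tk n k)

/-- The degree-`j` Taylor polynomial `ψ_{j,a,f}` of `f` at `a`, with derivatives taken
within the interval `I`. -/
noncomputable def psiF (j : ℕ) (a : ℝ) (f : ℝ → ℝ) (t : ℝ) : ℝ :=
  ∑ i ∈ Finset.range (j + 1),
    iteratedDerivWithin i f II a * (t - a) ^ i / (i.factorial : ℝ)

lemma cs_integral {a b : ℝ} (hab : a ≤ b) {g : ℝ → ℝ} (hg : ContinuousOn g (Set.Icc a b)) :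
    (∫ s in a..b, |g s|) ^ 2 ≤ (b - a) * ∫ s in a..b, g s ^ 2 := by
  rw [intervalIntegral.integral_of_le hab, intervalIntegral.integral_of_le hab]
  set μ := volume.restrict (Set.Ioc a b) with hμ
  haveI : IsFiniteMeasure μ := ⟨by
    rw [hμ, Measure.restrict_apply_univ]; exact measure_Ioc_lt_top⟩
  have hμuniv : μ Set.univ = ENNReal.ofReal (b - a) := by
    rw [hμ, Measure.restrict_apply_univ, Real.volume_Ioc]
  have hgm : AEStronglyMeasurable g μ :=
    (hg.aestronglyMeasurable measurableSet_Icc).mono_measure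
      (Measure.restrict_mono Set.Ioc_subset_Icc_self le_rfl)
  obtain ⟨C, hC⟩ := (isCompact_Icc).exists_bound_of_continuousOn hg
  have hgℒ2 : MemLp (fun s => |g s|) (ENNReal.ofReal 2) μ := by
    refine MemLp.of_bound (by simpa [Real.norm_eq_abs] using hgm.norm) C ?_
    filter_upwards [ae_restrict_mem measurableSet_Ioc] with x hx
    simpa [abs_abs] using hC x (Set.Ioc_subset_Icc_self hx)
  have h1ℒ2 : MemLp (fun _ : ℝ => (1 : ℝ)) (ENNReal.ofReal 2) μ := memLp_const 1
  have hpq : Real.HolderConjugate 2 2 := Real.HolderConjugate.two_two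
  have hCS := integral_mul_le_Lp_mul_Lq_of_nonneg hpq
    (f := fun _ : ℝ => (1 : ℝ)) (g := fun s => |g s|)
    (Filter.Eventually.of_forall fun _ => zero_le_one)
    (Filter.Eventually.of_forall fun s => abs_nonneg _) h1ℒ2 hgℒ2
  simp only [one_mul] at hCS
  have h1 : ∫ _ : ℝ, (1 : ℝ) ^ (2 : ℝ) ∂μ = b - a := by
    simp [Real.one_rpow, Measure.real, hμuniv, ENNReal.toReal_ofReal (by linarith : (0:ℝ) ≤ b - a)]
  have h2 : ∫ s, |g s| ^ (2 : ℝ) ∂μ = ∫ s, g s ^ 2 ∂μ := by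
    refine integral_congr_ae (Filter.Eventually.of_forall fun s => ?_)
    show |g s| ^ (2:ℝ) = g s ^ 2
    rw [Real.rpow_two, sq_abs]
  rw [h1, h2] at hCS
  have hnn : 0 ≤ ∫ s, g s ^ 2 ∂μ := integral_nonneg fun s => sq_nonneg _
  have hba : (0:ℝ) ≤ b - a := by linarith
  calc (∫ s, |g s| ∂μ) ^ 2
      ≤ ((b - a) ^ ((1:ℝ)/2) * (∫ s, g s ^ 2 ∂μ) ^ ((1:ℝ)/2)) ^ 2 := by
        refine pow_le_pow_left₀ (integral_nonneg fun s => abs_nonneg _) hCS 2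
    _ = (b - a) * ∫ s, g s ^ 2 ∂μ := by
        rw [mul_pow, ← Real.rpow_natCast ((b-a) ^ ((1:ℝ)/2)) 2,
          ← Real.rpow_natCast ((∫ s, g s ^ 2 ∂μ) ^ ((1:ℝ)/2)) 2,
          ← Real.rpow_mul hba, ← Real.rpow_mul hnn]
        norm_num


lemma uniqueDiffOn_II : UniqueDiffOn ℝ II := uniqueDiffOn_Icc (by norm_num)

lemma psiF_eq_taylor (j : ℕ) (f : ℝ → ℝ) (a t : ℝ) :
    psiF j a f t = taylorWithinEval f j II a t := by
  rw [taylor_within_apply, psiF]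
  refine Finset.sum_congr rfl fun i _ => ?_
  rw [smul_eq_mul]
  ring


lemma remainder_bound (j : ℕ) (f : ℝ → ℝ) (hf : ContDiffOn ℝ (j + 1 : ℕ) f II)
    {a b : ℝ} (hsub : Set.Icc a b ⊆ II) {t : ℝ} (ht : t ∈ Set.Icc a b) :
    |f t - psiF j a f t| ≤
      (j.factorial : ℝ)⁻¹ * (b - a) ^ j *
        ∫ s in a..b, |iteratedDerivWithin (j + 1) f II s| := by
  have hab : a ≤ b := ht.1.trans ht.2
  set g : ℝ → ℝ := iteratedDerivWithin (j + 1) f II with hgdef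
  have haII : a ∈ II := hsub ⟨le_rfl, hab⟩
  have hbII : b ∈ II := hsub ⟨hab, le_rfl⟩
  have hgc : ContinuousOn g II :=
    hf.continuousOn_iteratedDerivWithin (le_refl _) uniqueDiffOn_II
  have hfj : ContDiffOn ℝ j f II := hf.of_le (by exact_mod_cast Nat.le_succ j)
  set F : ℝ → ℝ := fun y => taylorWithinEval f j II y t with hFdef
  set F' : ℝ → ℝ := fun s => ((j.factorial : ℝ)⁻¹ * (t - s) ^ j) * g s with hF'def
  have hIccsub : Set.Icc a t ⊆ II := (Set.Icc_subset_Icc_right ht.2).trans hsub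
  have hF' : ∀ y ∈ Set.Ioo a t, HasDerivAt F (F' y) y := by
    intro y hy
    have hyII : y ∈ II := hIccsub ⟨hy.1.le, hy.2.le⟩
    have hnhds : II ∈ nhds y := by
      refine Icc_mem_nhds ?_ ?_
      · exact lt_of_le_of_lt haII.1 hy.1
      · exact lt_of_lt_of_le hy.2 (ht.2.trans hbII.2)
    have hdiff : DifferentiableWithinAt ℝ (iteratedDerivWithin j f II) II y :=
      (hf.differentiableOn_iteratedDerivWithin (by exact_mod_cast Nat.lt_succ_self j)
        uniqueDiffOn_II) y hyII
    have := hasDerivWithinAt_taylorWithinEval (x := t) uniqueDiffOn_II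
      self_mem_nhdsWithin hyII (subset_refl _) hfj hdiff
    have h2 := this.hasDerivAt hnhds
    simpa [hF'def, smul_eq_mul] using h2
  have hFcont : ContinuousOn F (Set.Icc a t) :=
    (continuousOn_taylorWithinEval uniqueDiffOn_II hfj).mono hIccsub
  have hF'cont : ContinuousOn F' (Set.Icc a t) := by
    refine (continuousOn_const.mul ((continuousOn_const.sub continuousOn_id).pow j)).mul
      (hgc.mono hIccsub)
  have hF'int : IntervalIntegrable F' volume a t :=
    hF'cont.intervalIntegrable_of_Icc ht.1
  have key : ∫ y in a..t, F' y = F t - F a :=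
    intervalIntegral.integral_eq_sub_of_hasDeriv_right_of_le ht.1 hFcont
      (fun y hy => (hF' y hy).hasDerivWithinAt) hF'int
  have hFt : F t = f t := taylorWithinEval_self f j II t
  have hFa : F a = psiF j a f t := (psiF_eq_taylor j f a t).symm
  rw [show f t - psiF j a f t = ∫ y in a..t, F' y by rw [key, hFt, hFa]]
  have hgcont_ab : ContinuousOn (fun s => |g s|) (Set.Icc a b) := (hgc.mono hsub).abs
  have hgint : IntervalIntegrable (fun s => |g s|) volume a b :=
    hgcont_ab.intervalIntegrable_of_Icc hab
  calc |∫ y in a..t, F' y| ≤ ∫ y in a..t, |F' y| :=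
        intervalIntegral.abs_integral_le_integral_abs ht.1
    _ ≤ ∫ y in a..t, (j.factorial : ℝ)⁻¹ * (b - a) ^ j * |g y| := by
        refine intervalIntegral.integral_mono_on ht.1 hF'int.abs ?_ ?_
        · exact (continuousOn_const.mul ((hgc.mono hIccsub).abs)).intervalIntegrable_of_Icc ht.1
        · intro y hy
          rw [hF'def]
          rw [abs_mul, abs_mul]
          have h1 : |(j.factorial : ℝ)⁻¹| = (j.factorial : ℝ)⁻¹ := by
            rw [abs_of_nonneg (inv_nonneg.mpr (Nat.cast_nonneg _))]
          have h2 : |(t - y) ^ j| ≤ (b - a) ^ j := by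
            rw [abs_pow]
            refine pow_le_pow_left₀ (abs_nonneg _) ?_ j
            rw [abs_of_nonneg (by linarith [hy.2] : (0:ℝ) ≤ t - y)]
            have := hy.1
            have := ht.2
            linarith
          rw [h1]
          refine mul_le_mul_of_nonneg_right ?_ (abs_nonneg _)
          exact mul_le_mul_of_nonneg_left h2 (inv_nonneg.mpr (Nat.cast_nonneg _))
    _ = (j.factorial : ℝ)⁻¹ * (b - a) ^ j * ∫ y in a..t, |g y| := by
        rw [← intervalIntegral.integral_const_mul]
    _ ≤ (j.factorial : ℝ)⁻¹ * (b - a) ^ j * ∫ s in a..b, |g s| := by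
        refine mul_le_mul_of_nonneg_left ?_ (mul_nonneg (inv_nonneg.mpr (Nat.cast_nonneg _)) (pow_nonneg (by linarith) j))
        refine intervalIntegral.integral_mono_interval le_rfl ht.1 ht.2 ?_ hgint
        exact Filter.Eventually.of_forall fun s => abs_nonneg _


lemma cell_bound (j : ℕ) (f : ℝ → ℝ) (hf : ContDiffOn ℝ (j + 1 : ℕ) f II)
    {a b : ℝ} (hab : a ≤ b) (hsub : Set.Icc a b ⊆ II)
    {A : Set ℝ} (hA : A ⊆ Set.Icc a b) (hAm : MeasurableSet A) :
    ∫ t in A, |f t - psiF j a f t| ^ 2 ≤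
      ((j.factorial : ℝ)⁻¹) ^ 2 * (b - a) ^ (2 * j + 2) *
        ∫ s in a..b, (iteratedDerivWithin (j + 1) f II s) ^ 2 := by
  set g : ℝ → ℝ := iteratedDerivWithin (j + 1) f II with hgdef
  have hgc : ContinuousOn g II :=
    hf.continuousOn_iteratedDerivWithin (le_refl _) uniqueDiffOn_II
  have hgcab : ContinuousOn g (Set.Icc a b) := hgc.mono hsub
  set M : ℝ := (j.factorial : ℝ)⁻¹ * (b - a) ^ j * ∫ s in a..b, |g s| with hMdef
  have hM : 0 ≤ M := by
    refine mul_nonneg (mul_nonneg (inv_nonneg.mpr (Nat.cast_nonneg _))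
      (pow_nonneg (by linarith) j)) ?_
    rw [intervalIntegral.integral_of_le hab]
    exact setIntegral_nonneg measurableSet_Ioc fun s _ => abs_nonneg _
  have hbd : ∀ t ∈ Set.Icc a b, |f t - psiF j a f t| ≤ M :=
    fun t ht => remainder_bound j f hf hsub ht
  -- continuity of the remainder
  have hpsic : Continuous (fun t => psiF j a f t) := by
    unfold psiF
    refine continuous_finset_sum _ fun i _ => ?_
    exact (continuous_const.mul ((continuous_id.sub continuous_const).pow i)).div_const _
  have hRc : ContinuousOn (fun t => |f t - psiF j a f t| ^ 2) (Set.Icc a b) :=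
    (((hf.continuousOn.mono hsub).sub hpsic.continuousOn).abs.pow 2)
  have hRint : IntegrableOn (fun t => |f t - psiF j a f t| ^ 2) A volume :=
    (hRc.integrableOn_Icc).mono_set hA
  have hvol : (volume A).toReal ≤ b - a := by
    have h1 : volume A ≤ volume (Set.Icc a b) := measure_mono hA
    rw [Real.volume_Icc] at h1
    calc (volume A).toReal ≤ (ENNReal.ofReal (b - a)).toReal :=
          ENNReal.toReal_mono ENNReal.ofReal_ne_top h1
      _ = b - a := ENNReal.toReal_ofReal (by linarith)
  have step1 : ∫ t in A, |f t - psiF j a f t| ^ 2 ≤ M ^ 2 * (b - a) := by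
    calc ∫ t in A, |f t - psiF j a f t| ^ 2 ≤ ∫ _ in A, M ^ 2 := by
          refine setIntegral_mono_on hRint (integrableOn_const ?_) hAm ?_
          · exact (lt_of_le_of_lt (measure_mono hA) (by rw [Real.volume_Icc]; exact ENNReal.ofReal_lt_top)).ne
          · intro t ht
            exact pow_le_pow_left₀ (abs_nonneg _) (hbd t (hA ht)) 2
      _ = M ^ 2 * (volume A).toReal := by rw [setIntegral_const, smul_eq_mul, mul_comm]; rfl
      _ ≤ M ^ 2 * (b - a) := mul_le_mul_of_nonneg_left hvol (sq_nonneg _)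
  have step2 : M ^ 2 ≤ ((j.factorial : ℝ)⁻¹) ^ 2 * (b - a) ^ (2 * j) *
      ((b - a) * ∫ s in a..b, g s ^ 2) := by
    have hcs := cs_integral hab hgcab
    calc M ^ 2 = ((j.factorial : ℝ)⁻¹) ^ 2 * (b - a) ^ (2 * j) * (∫ s in a..b, |g s|) ^ 2 := by
          rw [hMdef]; ring
      _ ≤ _ := by
          refine mul_le_mul_of_nonneg_left hcs ?_
          refine mul_nonneg (sq_nonneg _) (pow_nonneg (by linarith) _)
  have hInn : 0 ≤ ∫ s in a..b, g s ^ 2 := by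
    rw [intervalIntegral.integral_of_le hab]
    exact setIntegral_nonneg measurableSet_Ioc fun s _ => sq_nonneg _
  calc ∫ t in A, |f t - psiF j a f t| ^ 2 ≤ M ^ 2 * (b - a) := step1
    _ ≤ (((j.factorial : ℝ)⁻¹) ^ 2 * (b - a) ^ (2 * j) *
          ((b - a) * ∫ s in a..b, g s ^ 2)) * (b - a) :=
        mul_le_mul_of_nonneg_right step2 (by linarith)
    _ = ((j.factorial : ℝ)⁻¹) ^ 2 * (b - a) ^ (2 * j + 2) * ∫ s in a..b, g s ^ 2 := by
        ring

theorem stmt7 (j n : ℕ) (hn : 1 ≤ n) (f : ℝ → ℝ)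
    (hf : ContDiffOn ℝ (j + 1 : ℕ) f II) :
    ∑ k ∈ Finset.Icc 1 n, ∫ t in Ak n k, |f t - psiF j (tk n (k - 1)) f t| ^ 2
      ≤ 2 / (j.factorial : ℝ) ^ 2 * (n : ℝ) ^ (-(2 * (j : ℤ)) - 2) *
        ∫ t in II, (iteratedDerivWithin (j + 1) f II t) ^ 2 := by
  have npos : (0 : ℝ) < n := by exact_mod_cast hn
  have hn0 : (n : ℝ) ≠ 0 := ne_of_gt npos
  set g : ℝ → ℝ := iteratedDerivWithin (j + 1) f II with hgdef
  have hgc : ContinuousOn g II :=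
    hf.continuousOn_iteratedDerivWithin (le_refl _) uniqueDiffOn_II
  have htk_le : ∀ {i i' : ℕ}, i' ≤ i → tk n i' ≤ tk n i := by
    intro i i' h
    unfold tk
    have h1 : (i' : ℝ) ≤ i := by exact_mod_cast h
    have h2 : (i' : ℝ) / n ≤ (i : ℝ) / n := (div_le_div_iff_of_pos_right npos).mpr h1
    linarith
  have htkII : ∀ i : ℕ, i ≤ n → tk n i ∈ II := by
    intro i hi
    simp only [II, Set.mem_Icc, tk]
    constructor
    · have h0 : 0 ≤ (i : ℝ) / n := by positivity
      linarith
    · have h1 : (i : ℝ) / n ≤ 1 := by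
        rw [div_le_one npos]; exact_mod_cast hi
      linarith
  have hdiff : ∀ k : ℕ, 1 ≤ k → tk n k - tk n (k - 1) = 1 / n := by
    intro k hk
    unfold tk
    rw [Nat.cast_sub hk, Nat.cast_one]
    field_simp
    ring
  have hterm : ∀ k ∈ Finset.Icc 1 n,
      (∫ t in Ak n k, |f t - psiF j (tk n (k - 1)) f t| ^ 2) ≤
        ((j.factorial : ℝ)⁻¹) ^ 2 * ((1 : ℝ) / n) ^ (2 * j + 2) *
          ∫ s in (tk n (k - 1))..(tk n k), g s ^ 2 := by
    intro k hk
    rw [Finset.mem_Icc] at hk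
    have hk1 := hk.1
    have hkn := hk.2
    have hk1' : k - 1 ≤ k := Nat.sub_le k 1
    have hab : tk n (k - 1) ≤ tk n k := htk_le hk1'
    have hsub : Set.Icc (tk n (k - 1)) (tk n k) ⊆ II := by
      intro x hx
      have h1 := (htkII (k - 1) (le_trans hk1' hkn)).1
      have h2 := (htkII k hkn).2
      exact ⟨le_trans h1 hx.1, le_trans hx.2 h2⟩
    have hA : Ak n k ⊆ Set.Icc (tk n (k - 1)) (tk n k) := by
      unfold Ak; split_ifs
      exacts [subset_rfl, Set.Ico_subset_Icc_self]
    have hAm : MeasurableSet (Ak n k) := by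
      unfold Ak; split_ifs
      exacts [measurableSet_Icc, measurableSet_Ico]
    have hc := cell_bound j f hf hab hsub hA hAm
    rwa [hdiff k hk1] at hc
  refine le_trans (Finset.sum_le_sum hterm) ?_
  rw [← Finset.mul_sum]
  have hADJ : (∑ k ∈ Finset.Icc 1 n, ∫ s in (tk n (k - 1))..(tk n k), g s ^ 2)
      = ∫ t in II, g t ^ 2 := by
    have hre : (∑ k ∈ Finset.Icc 1 n, ∫ s in (tk n (k - 1))..(tk n k), g s ^ 2)
        = ∑ i ∈ Finset.range n, ∫ s in (tk n i)..(tk n (i + 1)), g s ^ 2 := by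
      rw [← Finset.Ico_add_one_right_eq_Icc, Finset.sum_Ico_eq_sum_range]
      refine Finset.sum_congr (by simp) fun i _ => ?_
      rw [show 1 + i - 1 = i from by omega, show 1 + i = i + 1 from by omega]
    rw [hre]
    have hint : ∀ i, i < n →
        IntervalIntegrable (fun s => g s ^ 2) volume (tk n i) (tk n (i + 1)) := by
      intro i hi
      have hsub' : Set.Icc (tk n i) (tk n (i + 1)) ⊆ II := fun x hx =>
        ⟨le_trans (htkII i (le_of_lt hi)).1 hx.1, le_trans hx.2 (htkII (i + 1) hi).2⟩
      exact ((hgc.mono hsub').pow 2).intervalIntegrable_of_Icc (htk_le (Nat.le_succ i))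
    rw [intervalIntegral.sum_integral_adjacent_intervals hint]
    have h0 : tk n 0 = -(1 / 2) := by simp [tk]
    have hN : tk n n = 1 / 2 := by
      unfold tk; rw [div_self hn0]; norm_num
    rw [h0, hN, intervalIntegral.integral_of_le (by norm_num), ← integral_Icc_eq_integral_Ioc]
    rfl
  rw [hADJ]
  have hInn : 0 ≤ ∫ t in II, g t ^ 2 :=
    setIntegral_nonneg measurableSet_Icc fun t _ => sq_nonneg _
  refine mul_le_mul_of_nonneg_right ?_ hInn
  have hz : ((1 : ℝ) / n) ^ (2 * j + 2) = (n : ℝ) ^ (-(2 * (j : ℤ)) - 2) := by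
    rw [show (-(2 * (j : ℤ)) - 2) = -((2 * j + 2 : ℕ) : ℤ) from by push_cast; ring]
    rw [zpow_neg, zpow_natCast, one_div, inv_pow]
  rw [hz]
  refine mul_le_mul_of_nonneg_right ?_ (zpow_nonneg (le_of_lt npos) _)
  rw [div_eq_mul_inv, ← inv_pow]
  have := sq_nonneg ((j.factorial : ℝ)⁻¹)
  nlinarith [this]
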